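/- Let p, q ∈ ℂ^{n+1} be nonzero with 0 < d(p,q) < π/2 and let t ∈ ℝ. Then Φ_t is complex-linear with |Φ_t(z)| = |z| for all z ∈ ℂ^{n+1} (a unitary map); Φ_t(z)·ᾱ = e^{−it}·(z·ᾱ) and Φ_t(z)·β̄ = e^{it}·(z·β̄) for all z; Φ_t(γ_s(p,q)) = γ_{s+t}(p,q) for all s ∈ ℝ; and consequently μ_{p,q}(Φ_t(z)) = μ_{p,q}(z) for every nonzero z with z·ᾱ ≠ 0 and z·β̄ ≠ 0. -/

import Mathlib

/-!
With `u = p/|p|` and `v = γ₀'(p,q)`, the pair `(u, v)` is orthonormal: `(|p|/(q·p̄))·q − u` is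
orthogonal to `u` and, by Pythagoras, has length `√(1/cos² d − 1) = tan d`, which the factor
`cot d` normalises. Hence `α, β` are orthonormal too, and `Φ_t` multiplies the `α`- and
`β`-coordinates by the unimodular numbers `e^{−it}`, `e^{it}` while fixing their orthogonal
complement, so it is unitary. As `γ_s = (e^{−is}·α + e^{is}·β)/√2`, `Φ_t` shifts the geodesic by
`t`, and `μ` only involves `|z·ᾱ|`, `|z·β̄|` and `|z|`, none of which `Φ_t` changes.
-/

noncomputable section

/-- Hermitian product `w·z̄ = Σᵢ wⁱ·conj(zⁱ)` on `ℂ^m`. -/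
def herm {m : ℕ} (w z : EuclideanSpace ℂ (Fin m)) : ℂ :=
  ∑ i, w i * (starRingEnd ℂ) (z i)

/-- Fubini–Study distance between (the projective classes of) `p` and `q`. -/
def fsDist {m : ℕ} (p q : EuclideanSpace ℂ (Fin m)) : ℝ :=
  Real.arccos (‖herm p q‖ / (‖p‖ * ‖q‖))

/-- Initial velocity `γ₀'(p,q)` of the geodesic from `[p]` to `[q]`. -/
def gammaDir {m : ℕ} (p q : EuclideanSpace ℂ (Fin m)) : EuclideanSpace ℂ (Fin m) :=
  (Real.cot (fsDist p q) : ℂ) • (((‖p‖ : ℂ) / herm q p) • q - (‖p‖ : ℂ)⁻¹ • p)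

/-- The geodesic `γ_t(p,q) = cos t·(p/|p|) + sin t·γ₀'(p,q)`. -/
def geo {m : ℕ} (t : ℝ) (p q : EuclideanSpace ℂ (Fin m)) : EuclideanSpace ℂ (Fin m) :=
  (Real.cos t : ℂ) • ((‖p‖ : ℂ)⁻¹ • p) + (Real.sin t : ℂ) • gammaDir p q

/-- The velocity `γ_t'(p,q) = −sin t·(p/|p|) + cos t·γ₀'(p,q)`. -/
def geoVel {m : ℕ} (t : ℝ) (p q : EuclideanSpace ℂ (Fin m)) : EuclideanSpace ℂ (Fin m) :=
  (-(Real.sin t) : ℂ) • ((‖p‖ : ℂ)⁻¹ • p) + (Real.cos t : ℂ) • gammaDir p q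

/-- `α = (p/|p| + i·γ₀'(p,q))/√2`. -/
def alphaV {m : ℕ} (p q : EuclideanSpace ℂ (Fin m)) : EuclideanSpace ℂ (Fin m) :=
  ((Real.sqrt 2 : ℂ))⁻¹ • ((‖p‖ : ℂ)⁻¹ • p + Complex.I • gammaDir p q)

/-- `β = (p/|p| − i·γ₀'(p,q))/√2`. -/
def betaV {m : ℕ} (p q : EuclideanSpace ℂ (Fin m)) : EuclideanSpace ℂ (Fin m) :=
  ((Real.sqrt 2 : ℂ))⁻¹ • ((‖p‖ : ℂ)⁻¹ • p - Complex.I • gammaDir p q)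

/-- `μ_{p,q}(z) = −(1/2)·log(2·|z·ᾱ|·|z·β̄|/|z|²)`. -/
def muW {m : ℕ} (p q z : EuclideanSpace ℂ (Fin m)) : ℝ :=
  -(1 / 2 : ℝ) * Real.log (2 * ‖herm z (alphaV p q)‖ *
    ‖herm z (betaV p q)‖ / ‖z‖ ^ 2)

/-- The isometry `Φ_t(z) = z − (z·ᾱ)α − (z·β̄)β + e^{−it}(z·ᾱ)α + e^{it}(z·β̄)β`. -/
def PhiMap {m : ℕ} (p q : EuclideanSpace ℂ (Fin m)) (t : ℝ) (z : EuclideanSpace ℂ (Fin m)) :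
    EuclideanSpace ℂ (Fin m) :=
  z - herm z (alphaV p q) • alphaV p q - herm z (betaV p q) • betaV p q
    + (Complex.exp (-(Complex.I * t)) * herm z (alphaV p q)) • alphaV p q
    + (Complex.exp (Complex.I * t) * herm z (betaV p q)) • betaV p q

open Complex
open scoped InnerProductSpace

theorem orthonormal_pair_iff {𝕜 E : Type*} [RCLike 𝕜] [NormedAddCommGroup E]
    [InnerProductSpace 𝕜 E] {a b : E} :
    Orthonormal 𝕜 ![a, b] ↔ ⟪a, a⟫_𝕜 = 1 ∧ ⟪b, b⟫_𝕜 = 1 ∧ ⟪a, b⟫_𝕜 = 0 := by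
  rw [orthonormal_iff_ite]
  simp only [Fin.forall_fin_two, Matrix.cons_val_zero, Matrix.cons_val_one, if_true,
    Fin.isValue, zero_ne_one, one_ne_zero, if_false, inner_eq_zero_symm (x := b)]
  tauto

section ComplexInnerProductSpace

variable {E : Type*} [NormedAddCommGroup E] [InnerProductSpace ℂ E]

theorem norm_inv_norm_smul_self {x : E} (hx : x ≠ 0) : ‖(‖x‖ : ℂ)⁻¹ • x‖ = 1 := by
  rw [norm_smul, norm_inv, norm_real, norm_norm, inv_mul_cancel₀ (norm_ne_zero_iff.mpr hx)]

theorem ofReal_sqrt_two_sq : ((√2 : ℝ) : ℂ) ^ 2 = 2 := by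
  exact_mod_cast Real.sq_sqrt (by norm_num : (0 : ℝ) ≤ 2)

theorem Orthonormal.sqrt_two_inv_smul_add_sub {u v : E} (h : Orthonormal ℂ ![u, v]) :
    Orthonormal ℂ ![((√2 : ℝ) : ℂ)⁻¹ • (u + I • v), ((√2 : ℝ) : ℂ)⁻¹ • (u - I • v)] := by
  obtain ⟨hu, hv, huv⟩ := orthonormal_pair_iff.mp h
  refine orthonormal_pair_iff.mpr ⟨?_, ?_, ?_⟩ <;>
  · simp only [inner_add_left, inner_sub_left, inner_add_right, inner_sub_right,
      inner_smul_left, inner_smul_right, hu, hv, huv, inner_eq_zero_symm.mp huv, conj_I,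
      conj_ofReal, map_inv₀]
    field_simp
    ring_nf
    norm_num [ofReal_sqrt_two_sq]

theorem cos_smul_add_sin_smul_eq (u v : E) (s : ℝ) :
    (Real.cos s : ℂ) • u + (Real.sin s : ℂ) • v =
      (((√2 : ℝ) : ℂ)⁻¹ * exp (-(I * s))) • (((√2 : ℝ) : ℂ)⁻¹ • (u + I • v)) +
      (((√2 : ℝ) : ℂ)⁻¹ * exp (I * s)) • (((√2 : ℝ) : ℂ)⁻¹ • (u - I • v)) := by
  have hneg : exp (-(I * s)) = cos s - sin s * I := by
    rw [show -(I * s) = (-s : ℂ) * I by ring, exp_mul_I, cos_neg, sin_neg]; ring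
  have hpos : exp (I * s) = cos s + sin s * I := by rw [mul_comm, exp_mul_I]
  rw [hneg, hpos, ofReal_cos, ofReal_sin]
  match_scalars <;>
  · field_simp
    ring_nf
    norm_num [ofReal_sqrt_two_sq]

def pairScale (a b : E) (c d : ℂ) (z : E) : E :=
  z - ⟪a, z⟫_ℂ • a - ⟪b, z⟫_ℂ • b + (c * ⟪a, z⟫_ℂ) • a + (d * ⟪b, z⟫_ℂ) • b

theorem pairScale_isLinearMap (a b : E) (c d : ℂ) : IsLinearMap ℂ (pairScale a b c d) where
  map_add x y := by simp only [pairScale, inner_add_right]; module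
  map_smul r x := by simp only [pairScale, inner_smul_right]; module

variable {a b : E} {c d : ℂ} (h : Orthonormal ℂ ![a, b])
include h

theorem inner_pairScale_fst (z : E) : ⟪a, pairScale a b c d z⟫_ℂ = c * ⟪a, z⟫_ℂ := by
  obtain ⟨ha, -, hab⟩ := orthonormal_pair_iff.mp h
  simp only [pairScale, inner_add_right, inner_sub_right, inner_smul_right, ha, hab]
  ring

theorem inner_pairScale_snd (z : E) : ⟪b, pairScale a b c d z⟫_ℂ = d * ⟪b, z⟫_ℂ := by
  obtain ⟨-, hb, hab⟩ := orthonormal_pair_iff.mp h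
  simp only [pairScale, inner_add_right, inner_sub_right, inner_smul_right, hb,
    inner_eq_zero_symm.mp hab]
  ring

theorem pairScale_smul_add_smul (x y : ℂ) :
    pairScale a b c d (x • a + y • b) = (c * x) • a + (d * y) • b := by
  obtain ⟨ha, hb, hab⟩ := orthonormal_pair_iff.mp h
  simp only [pairScale, inner_add_right, inner_smul_right, ha, hb, hab,
    inner_eq_zero_symm.mp hab]
  module

theorem norm_pairScale (hc : ‖c‖ = 1) (hd : ‖d‖ = 1) (z : E) :
    ‖pairScale a b c d z‖ = ‖z‖ := by
  obtain ⟨ha, hb, hab⟩ := orthonormal_pair_iff.mp h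
  have hcc : (starRingEnd ℂ) c * c = 1 := by
    rw [mul_comm, mul_conj, normSq_eq_norm_sq, hc]; norm_num
  have hdd : (starRingEnd ℂ) d * d = 1 := by
    rw [mul_comm, mul_conj, normSq_eq_norm_sq, hd]; norm_num
  suffices ⟪pairScale a b c d z, pairScale a b c d z⟫_ℂ = ⟪z, z⟫_ℂ by
    rw [norm_eq_sqrt_re_inner (𝕜 := ℂ), norm_eq_sqrt_re_inner (𝕜 := ℂ) z, this]
  simp only [pairScale, inner_add_right, inner_sub_right, inner_smul_right,
    inner_add_left, inner_sub_left, inner_smul_left, map_mul, inner_conj_symm, ha, hb, hab,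
    inner_eq_zero_symm.mp hab]
  linear_combination ⟪z, a⟫_ℂ * ⟪a, z⟫_ℂ * hcc + ⟪z, b⟫_ℂ * ⟪b, z⟫_ℂ * hdd

end ComplexInnerProductSpace

section FubiniStudy

variable {m : ℕ} (p q : EuclideanSpace ℂ (Fin m))

theorem herm_eq_inner (w z : EuclideanSpace ℂ (Fin m)) : herm w z = ⟪z, w⟫_ℂ := by
  simp [herm, PiLp.inner_apply, RCLike.inner_apply]

theorem cos_fsDist : Real.cos (fsDist p q) = ‖⟪p, q⟫_ℂ‖ / (‖p‖ * ‖q‖) := by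
  have hle : ‖⟪p, q⟫_ℂ‖ / (‖p‖ * ‖q‖) ≤ 1 :=
    div_le_one_of_le₀ (norm_inner_le_norm p q) (by positivity)
  have hnonneg : 0 ≤ ‖⟪p, q⟫_ℂ‖ / (‖p‖ * ‖q‖) := by positivity
  rw [fsDist, herm_eq_inner, norm_inner_symm, Real.cos_arccos (by linarith) hle]

theorem cos_fsDist_pos (hd2 : fsDist p q < Real.pi / 2) : 0 < Real.cos (fsDist p q) := by
  have hd : 0 ≤ fsDist p q := Real.arccos_nonneg _
  exact Real.cos_pos_of_mem_Ioo ⟨by linarith [Real.pi_pos], hd2⟩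

theorem inner_ne_zero_of_fsDist_lt (hd2 : fsDist p q < Real.pi / 2) : ⟪p, q⟫_ℂ ≠ 0 := by
  intro h
  have hcos := cos_fsDist_pos p q hd2
  rw [cos_fsDist, h, norm_zero, zero_div] at hcos
  exact hcos.false

theorem gammaDir_eq_inner : gammaDir p q =
    (Real.cot (fsDist p q) : ℂ) • (((‖p‖ : ℂ) / ⟪p, q⟫_ℂ) • q - (‖p‖ : ℂ)⁻¹ • p) := by
  rw [gammaDir, herm_eq_inner]

theorem inner_inv_norm_smul_sub_eq_zero (h : ⟪p, q⟫_ℂ ≠ 0) :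
    ⟪(‖p‖ : ℂ)⁻¹ • p, ((‖p‖ : ℂ) / ⟪p, q⟫_ℂ) • q - (‖p‖ : ℂ)⁻¹ • p⟫_ℂ = 0 := by
  have hp : p ≠ 0 := by rintro rfl; simp at h
  have hp' : (‖p‖ : ℂ) ≠ 0 := by exact_mod_cast norm_ne_zero_iff.mpr hp
  rw [inner_sub_right, inner_self_eq_one_of_norm_eq_one (norm_inv_norm_smul_self hp),
    inner_smul_right, inner_smul_left, map_inv₀, conj_ofReal]
  field_simp
  ring

theorem norm_gammaDir (hd0 : 0 < fsDist p q) (hd2 : fsDist p q < Real.pi / 2) :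
    ‖gammaDir p q‖ = 1 := by
  have hc := inner_ne_zero_of_fsDist_lt p q hd2
  have hp : p ≠ 0 := by rintro rfl; simp at hc
  have hq : q ≠ 0 := by rintro rfl; simp at hc
  have hcos := cos_fsDist_pos p q hd2
  have hsin : 0 < Real.sin (fsDist p q) :=
    Real.sin_pos_of_pos_of_lt_pi hd0 (by linarith [Real.pi_pos])
  set w := ((‖p‖ : ℂ) / ⟪p, q⟫_ℂ) • q - (‖p‖ : ℂ)⁻¹ • p
  have hpyth := norm_add_sq_eq_norm_sq_add_norm_sq_of_inner_eq_zero _ w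
    (inner_inv_norm_smul_sub_eq_zero p q hc)
  rw [add_sub_cancel, norm_inv_norm_smul_self hp] at hpyth
  have hsec : ‖((‖p‖ : ℂ) / ⟪p, q⟫_ℂ) • q‖ * Real.cos (fsDist p q) = 1 := by
    rw [cos_fsDist, norm_smul, norm_div, norm_real, norm_norm]
    field_simp
  have hw : ‖w‖ * Real.cos (fsDist p q) = Real.sin (fsDist p q) := by
    refine (pow_left_inj₀ (by positivity) hsin.le two_ne_zero).mp ?_
    linear_combination (-Real.cos (fsDist p q) ^ 2) * hpyth
      + (‖((‖p‖ : ℂ) / ⟪p, q⟫_ℂ) • q‖ * Real.cos (fsDist p q) + 1) * hsec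
      - Real.sin_sq_add_cos_sq (fsDist p q)
  rw [gammaDir_eq_inner, norm_smul, norm_real, Real.norm_of_nonneg
    (Real.cot_eq_cos_div_sin _ ▸ by positivity), Real.cot_eq_cos_div_sin, div_mul_eq_mul_div,
    mul_comm _ ‖w‖, hw, div_self hsin.ne']

theorem orthonormal_inv_norm_smul_gammaDir (hd0 : 0 < fsDist p q) (hd2 : fsDist p q < Real.pi / 2) :
    Orthonormal ℂ ![(‖p‖ : ℂ)⁻¹ • p, gammaDir p q] := by
  have hc := inner_ne_zero_of_fsDist_lt p q hd2
  have hp : p ≠ 0 := by rintro rfl; simp at hc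
  refine orthonormal_pair_iff.mpr ⟨inner_self_eq_one_of_norm_eq_one (norm_inv_norm_smul_self hp),
    inner_self_eq_one_of_norm_eq_one (norm_gammaDir p q hd0 hd2), ?_⟩
  rw [gammaDir_eq_inner, inner_smul_right, inner_inv_norm_smul_sub_eq_zero p q hc, mul_zero]

theorem orthonormal_alphaV_betaV (hd0 : 0 < fsDist p q) (hd2 : fsDist p q < Real.pi / 2) :
    Orthonormal ℂ ![alphaV p q, betaV p q] :=
  (orthonormal_inv_norm_smul_gammaDir p q hd0 hd2).sqrt_two_inv_smul_add_sub

theorem geo_eq_smul_alphaV_add_smul_betaV (s : ℝ) : geo s p q =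
    (((√2 : ℝ) : ℂ)⁻¹ * exp (-(I * s))) • alphaV p q +
      (((√2 : ℝ) : ℂ)⁻¹ * exp (I * s)) • betaV p q :=
  cos_smul_add_sin_smul_eq _ _ s

theorem PhiMap_eq_pairScale (t : ℝ) :
    PhiMap p q t = pairScale (alphaV p q) (betaV p q) (exp (-(I * t))) (exp (I * t)) := by
  funext z
  simp only [PhiMap, pairScale, herm_eq_inner]

end FubiniStudy

theorem stmt12_general {n : ℕ} (p q : EuclideanSpace ℂ (Fin (n + 1)))
    (hd0 : 0 < fsDist p q) (hd2 : fsDist p q < Real.pi / 2) (t : ℝ) :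
    IsLinearMap ℂ (PhiMap p q t) ∧
    (∀ z : EuclideanSpace ℂ (Fin (n + 1)), ‖PhiMap p q t z‖ = ‖z‖) ∧
    (∀ z : EuclideanSpace ℂ (Fin (n + 1)),
      herm (PhiMap p q t z) (alphaV p q) = Complex.exp (-(Complex.I * t)) * herm z (alphaV p q)) ∧
    (∀ z : EuclideanSpace ℂ (Fin (n + 1)),
      herm (PhiMap p q t z) (betaV p q) = Complex.exp (Complex.I * t) * herm z (betaV p q)) ∧
    (∀ s : ℝ, PhiMap p q t (geo s p q) = geo (s + t) p q) ∧
    (∀ z : EuclideanSpace ℂ (Fin (n + 1)), z ≠ 0 →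
      herm z (alphaV p q) ≠ 0 → herm z (betaV p q) ≠ 0 →
      muW p q (PhiMap p q t z) = muW p q z) := by
  have h := orthonormal_alphaV_betaV p q hd0 hd2
  have hneg : ‖exp (-(I * t))‖ = 1 := by simpa using norm_exp_I_mul_ofReal (-t)
  have hpos : ‖exp (I * t)‖ = 1 := norm_exp_I_mul_ofReal t
  simp only [PhiMap_eq_pairScale, herm_eq_inner]
  refine ⟨pairScale_isLinearMap _ _ _ _, norm_pairScale h hneg hpos, inner_pairScale_fst h,
    inner_pairScale_snd h, fun s => ?_, fun z _ _ _ => ?_⟩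
  · rw [geo_eq_smul_alphaV_add_smul_betaV, geo_eq_smul_alphaV_add_smul_betaV,
      pairScale_smul_add_smul h, ofReal_add, mul_add, neg_add, exp_add, exp_add]
    match_scalars <;> ring
  · simp only [muW, herm_eq_inner, inner_pairScale_fst h, inner_pairScale_snd h, norm_mul, hneg,
      hpos, one_mul, norm_pairScale h hneg hpos]

theorem stmt12 {n : ℕ} (p q : EuclideanSpace ℂ (Fin (n + 1))) (hp : p ≠ 0) (hq : q ≠ 0)
    (hd0 : 0 < fsDist p q) (hd2 : fsDist p q < Real.pi / 2) (t : ℝ) :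
    IsLinearMap ℂ (PhiMap p q t) ∧
    (∀ z : EuclideanSpace ℂ (Fin (n + 1)), ‖PhiMap p q t z‖ = ‖z‖) ∧
    (∀ z : EuclideanSpace ℂ (Fin (n + 1)),
      herm (PhiMap p q t z) (alphaV p q) = Complex.exp (-(Complex.I * t)) * herm z (alphaV p q)) ∧
    (∀ z : EuclideanSpace ℂ (Fin (n + 1)),
      herm (PhiMap p q t z) (betaV p q) = Complex.exp (Complex.I * t) * herm z (betaV p q)) ∧
    (∀ s : ℝ, PhiMap p q t (geo s p q) = geo (s + t) p q) ∧
    (∀ z : EuclideanSpace ℂ (Fin (n + 1)), z ≠ 0 →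
      herm z (alphaV p q) ≠ 0 → herm z (betaV p q) ≠ 0 →
      muW p q (PhiMap p q t z) = muW p q z) :=
  stmt12_general p q hd0 hd2 t
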